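/- arXiv:2102.08374 — 4 statements merged into one kernel-verified Lean document; each statement's English description precedes it below -/
import Mathlib

section
/- (Unbiasedness and second moment of the IntDIANA estimator.) Fix vectors g_1, …, g_n, h_1, …, h_n ∈ ℝ^d and a scaling vector α ∈ ℝ^d with strictly positive entries. Let Q_i = (1/α) ∘ Int(α ∘ (g_i − h_i)), where the randomized roundings are independent across coordinates and across i = 1, …, n, and let h̄ = (1/n) Σ_{i=1}^n h_i and g = h̄ + (1/n) Σ_{i=1}^n Q_i. Then E[g] = (1/n) Σ_{i=1}^n g_i, and E[‖g‖²] ≤ ‖(1/n) Σ_{i=1}^n g_i‖² + (1/(4n)) Σ_{j=1}^d 1/α_j². -/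
open MeasureTheory Finset

/-- The randomized integer rounding `Int : ℝ → ℤ`, driven by a uniform random variable
`u ∈ [0,1]`: it returns `⌊t⌋ + 1` when `u < t - ⌊t⌋` (an event of probability `t - ⌊t⌋`)
and `⌊t⌋` otherwise. -/
noncomputable def rInt (t u : ℝ) : ℤ := if u < Int.fract t then ⌊t⌋ + 1 else ⌊t⌋

/-- The randomness driving the roundings: independent uniforms on `[0,1]`, one for each
worker `i = 1, …, n` and each coordinate `j = 1, …, d`. -/
noncomputable def roundMeasure (n d : ℕ) : Measure (Fin n → Fin d → ℝ) :=
  Measure.pi fun _ => Measure.pi fun _ => volume.restrict (Set.Icc (0 : ℝ) 1)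

open ProbabilityTheory

/-! `rInt t` takes only the values `⌊t⌋` and `⌊t⌋ + 1` and has mean `t`. Hence, in coordinate `j`,
each `Q_i` is an unbiased estimate of `g_i - h_i` confined to an interval of length `1/α_j`, and
Popoviciu's inequality bounds its variance by `1/(4α_j²)`. The `Q_i` are independent, so the
variance of their average is at most `1/(4nα_j²)`, and `E[g_j²] = (E g_j)² + Var g_j`. -/

instance : IsProbabilityMeasure (volume.restrict (Set.Icc (0 : ℝ) 1)) :=
  ⟨by simp [Real.volume_Icc]⟩

instance (n d : ℕ) : IsProbabilityMeasure (roundMeasure n d) := by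
  unfold roundMeasure; infer_instance

/-- A coordinate of the paper's `(1/α) ∘ Int(α ∘ y)`, the rounding being driven by `u`. -/
noncomputable def quantize (α y u : ℝ) : ℝ := α⁻¹ * rInt (α * y) u

lemma rInt_mem_Icc (t u : ℝ) : (rInt t u : ℝ) ∈ Set.Icc (⌊t⌋ : ℝ) (⌊t⌋ + 1) := by
  unfold rInt; split_ifs <;> simp

lemma measurable_rInt (t : ℝ) : Measurable fun u => (rInt t u : ℝ) := by
  simp only [rInt, apply_ite (fun z : ℤ => (z : ℝ))]
  exact Measurable.ite measurableSet_Iio measurable_const measurable_const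

lemma integral_ite_lt {c : ℝ} (hc0 : 0 ≤ c) (hc1 : c ≤ 1) (a b : ℝ) :
    ∫ u, (if u < c then a else b) ∂(volume.restrict (Set.Icc (0 : ℝ) 1))
      = c * a + (1 - c) * b := by
  have hind : (fun u : ℝ => if u < c then a else b)
      = fun u => (Set.Iio c).indicator (fun _ => a - b) u + b := by
    funext u; by_cases hu : u < c <;> simp [hu]
  have hIio : volume.restrict (Set.Icc (0 : ℝ) 1) (Set.Iio c) = ENNReal.ofReal c := by
    have hset : Set.Iio c ∩ Set.Icc 0 1 = Set.Ico 0 c := by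
      ext x; simp only [Set.mem_inter_iff, Set.mem_Iio, Set.mem_Icc, Set.mem_Ico]; grind
    rw [Measure.restrict_apply measurableSet_Iio, hset, Real.volume_Ico, sub_zero]
  rw [hind, integral_add ((integrable_const _).indicator measurableSet_Iio) (integrable_const b),
    integral_indicator measurableSet_Iio, setIntegral_const, integral_const, measureReal_def, hIio]
  simp [hc0]
  ring

lemma integral_rInt (t : ℝ) :
    ∫ u, (rInt t u : ℝ) ∂(volume.restrict (Set.Icc (0 : ℝ) 1)) = t := by
  simp only [rInt, apply_ite (fun z : ℤ => (z : ℝ))]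
  rw [integral_ite_lt (Int.fract_nonneg t) (Int.fract_lt_one t).le]
  push_cast
  linarith [Int.fract_add_floor t]

section Quantize

variable {α : ℝ}

lemma quantize_mem_Icc (hα : 0 < α) (y u : ℝ) :
    quantize α y u ∈ Set.Icc (α⁻¹ * ⌊α * y⌋) (α⁻¹ * ⌊α * y⌋ + α⁻¹) := by
  obtain ⟨hlo, hhi⟩ := rInt_mem_Icc (α * y) u
  have hα' : 0 < α⁻¹ := inv_pos.mpr hα
  constructor <;> unfold quantize <;> nlinarith

lemma measurable_quantize (α y : ℝ) : Measurable (quantize α y) :=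
  (measurable_rInt (α * y)).const_mul α⁻¹

lemma integral_quantize (hα : α ≠ 0) (y : ℝ) :
    ∫ u, quantize α y u ∂(volume.restrict (Set.Icc (0 : ℝ) 1)) = y := by
  simp only [quantize, integral_const_mul, integral_rInt]
  field_simp

variable {Ω : Type*} [MeasurableSpace Ω] {μ : Measure Ω} [IsProbabilityMeasure μ]

lemma memLp_quantize_comp (hα : 0 < α) (y : ℝ) {V : Ω → ℝ} (hV : AEMeasurable V μ)
    (p : ENNReal) : MemLp (fun ω => quantize α y (V ω)) p μ :=
  memLp_of_bounded (.of_forall fun ω => quantize_mem_Icc hα y (V ω))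
    ((measurable_quantize α y).comp_aemeasurable hV).aestronglyMeasurable p

lemma variance_quantize_comp_le (hα : 0 < α) (y : ℝ) {V : Ω → ℝ} (hV : AEMeasurable V μ) :
    Var[fun ω => quantize α y (V ω); μ] ≤ 1 / (4 * α ^ 2) := by
  refine (variance_le_sq_of_bounded (.of_forall fun ω => quantize_mem_Icc hα y (V ω))
    ((measurable_quantize α y).comp_aemeasurable hV)).trans_eq ?_
  field_simp
  ring

end Quantize

section QuantizedAverage

variable {Ω ι : Type*} [MeasurableSpace Ω] {μ : Measure Ω} [IsProbabilityMeasure μ] [Fintype ι]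
  {α : ℝ} {U : ι → Ω → ℝ} (c s : ℝ) (y : ι → ℝ)

lemma memLp_const_add_mul_sum_quantize (hα : 0 < α) (hU : ∀ i, AEMeasurable (U i) μ)
    (p : ENNReal) : MemLp (fun ω => c + s * ∑ i, quantize α (y i) (U i ω)) p μ :=
  (memLp_const c).add <|
    (memLp_finsetSum _ fun i _ => memLp_quantize_comp hα (y i) (hU i) p).const_mul s

lemma integral_const_add_mul_sum_quantize (hα : 0 < α)
    (hU : ∀ i, HasLaw (U i) (volume.restrict (Set.Icc (0 : ℝ) 1)) μ) :
    ∫ ω, c + s * ∑ i, quantize α (y i) (U i ω) ∂μ = c + s * ∑ i, y i := by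
  have hint : ∀ i, Integrable (fun ω => quantize α (y i) (U i ω)) μ := fun i =>
    (memLp_quantize_comp hα (y i) (hU i).aemeasurable 1).integrable le_rfl
  have hmean : ∀ i, ∫ ω, quantize α (y i) (U i ω) ∂μ = y i := fun i =>
    ((hU i).integral_comp (measurable_quantize α (y i)).aestronglyMeasurable).trans
      (integral_quantize hα.ne' (y i))
  rw [integral_add (integrable_const c) ((integrable_finsetSum _ fun i _ => hint i).const_mul s),
    integral_const_mul, integral_finsetSum _ fun i _ => hint i]
  simp [hmean]

lemma variance_const_add_mul_sum_quantize_le (hα : 0 < α) (hU : ∀ i, AEMeasurable (U i) μ)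
    (hindep : iIndepFun U μ) :
    Var[fun ω => c + s * ∑ i, quantize α (y i) (U i ω); μ]
      ≤ s ^ 2 * Fintype.card ι * (1 / (4 * α ^ 2)) := by
  have hsum : Var[fun ω => ∑ i, quantize α (y i) (U i ω); μ]
      = ∑ i, Var[fun ω => quantize α (y i) (U i ω); μ] := by
    rw [← IndepFun.variance_sum (fun i _ => memLp_quantize_comp hα (y i) (hU i) 2)]
    · simp only [sum_fn]
    · exact fun i _ j _ hij =>
        (hindep.comp (fun i => quantize α (y i)) fun i => measurable_quantize α (y i)).indepFun hij
  have hmeas : AEStronglyMeasurable (fun ω => s * ∑ i, quantize α (y i) (U i ω)) μ :=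
    ((memLp_finsetSum _ fun i _ => memLp_quantize_comp hα (y i) (hU i) 1).const_mul
      s).aestronglyMeasurable
  calc Var[fun ω => c + s * ∑ i, quantize α (y i) (U i ω); μ]
      = s ^ 2 * ∑ i, Var[fun ω => quantize α (y i) (U i ω); μ] := by
        rw [variance_const_add hmeas, variance_const_mul, hsum]
    _ ≤ s ^ 2 * ∑ _i : ι, 1 / (4 * α ^ 2) := by
        gcongr with i
        exact variance_quantize_comp_le hα (y i) (hU i)
    _ = s ^ 2 * Fintype.card ι * (1 / (4 * α ^ 2)) := by
        simp [mul_assoc]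

lemma integral_sq_const_add_mul_sum_quantize_le (hα : 0 < α)
    (hU : ∀ i, HasLaw (U i) (volume.restrict (Set.Icc (0 : ℝ) 1)) μ) (hindep : iIndepFun U μ) :
    ∫ ω, (c + s * ∑ i, quantize α (y i) (U i ω)) ^ 2 ∂μ
      ≤ (c + s * ∑ i, y i) ^ 2 + s ^ 2 * Fintype.card ι * (1 / (4 * α ^ 2)) := by
  have hU' : ∀ i, AEMeasurable (U i) μ := fun i => (hU i).aemeasurable
  have hvar := variance_const_add_mul_sum_quantize_le c s y hα hU' hindep
  rw [variance_eq_sub (memLp_const_add_mul_sum_quantize c s y hα hU' 2),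
    integral_const_add_mul_sum_quantize c s y hα hU] at hvar
  simp only [Pi.pow_apply] at hvar
  linarith

end QuantizedAverage

lemma hasLaw_roundMeasure_apply {n d : ℕ} (i : Fin n) (j : Fin d) :
    HasLaw (fun ω => ω i j) (volume.restrict (Set.Icc (0 : ℝ) 1)) (roundMeasure n d) :=
  have hworker := measurePreserving_eval
    (fun _ : Fin n => Measure.pi fun _ : Fin d => volume.restrict (Set.Icc (0 : ℝ) 1)) i
  ((measurePreserving_eval _ j).comp hworker).hasLaw

lemma iIndepFun_roundMeasure_apply {n d : ℕ} (j : Fin d) :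
    iIndepFun (fun i ω => ω i j) (roundMeasure n d) := by
  unfold roundMeasure
  exact iIndepFun_pi (X := fun _ (x : Fin d → ℝ) => x j) fun _ =>
    (measurable_pi_apply j).aemeasurable

theorem stmt15_general (d n : ℕ)
    (g h : Fin n → Fin d → ℝ) (α : Fin d → ℝ) (hα : ∀ j, 0 < α j)
    (gEst : (Fin n → Fin d → ℝ) → Fin d → ℝ)
    (hgEst : ∀ ω j, gEst ω j = (n : ℝ)⁻¹ * ∑ i, h i j +
      (n : ℝ)⁻¹ * ∑ i, (α j)⁻¹ * (rInt (α j * (g i j - h i j)) (ω i j) : ℝ)) :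
    (∫ ω, gEst ω ∂(roundMeasure n d)) = (n : ℝ)⁻¹ • ∑ i, g i ∧
      (∫ ω, ∑ j, (gEst ω j) ^ 2 ∂(roundMeasure n d)) ≤
        (∑ j, ((n : ℝ)⁻¹ * ∑ i, g i j) ^ 2) + (1 / (4 * n)) * ∑ j, ((α j) ^ 2)⁻¹ := by
  have hcoord : ∀ ω j, gEst ω j = (n : ℝ)⁻¹ * ∑ i, h i j +
      (n : ℝ)⁻¹ * ∑ i, quantize (α j) (g i j - h i j) (ω i j) := hgEst
  have hmemLp : ∀ j, MemLp (fun ω => gEst ω j) 2 (roundMeasure n d) := fun j => by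
    simp_rw [hcoord]
    exact memLp_const_add_mul_sum_quantize _ _ _ (hα j)
      (fun i => (hasLaw_roundMeasure_apply i j).aemeasurable) 2
  have hmean : ∀ j, ∫ ω, gEst ω j ∂(roundMeasure n d) = (n : ℝ)⁻¹ * ∑ i, g i j := fun j => by
    simp_rw [hcoord]
    rw [integral_const_add_mul_sum_quantize _ _ _ (hα j) fun i => hasLaw_roundMeasure_apply i j,
      sum_sub_distrib]
    ring
  have hsecond : ∀ j, ∫ ω, gEst ω j ^ 2 ∂(roundMeasure n d)
      ≤ ((n : ℝ)⁻¹ * ∑ i, g i j) ^ 2 + 1 / (4 * n) * ((α j) ^ 2)⁻¹ := fun j => by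
    have hbound := integral_sq_const_add_mul_sum_quantize_le ((n : ℝ)⁻¹ * ∑ i, h i j) (n : ℝ)⁻¹
      (fun i => g i j - h i j) (hα j) (fun i => hasLaw_roundMeasure_apply i j)
      (iIndepFun_roundMeasure_apply j)
    have hn : (n : ℝ)⁻¹ ^ 2 * n = (n : ℝ)⁻¹ := by
      rw [sq, mul_right_comm]; simpa using mul_inv_mul_cancel (n : ℝ)⁻¹
    simp_rw [hcoord]
    rw [Fintype.card_fin, hn, sum_sub_distrib] at hbound
    convert hbound using 2 <;> ring
  refine ⟨funext fun j => ?_, ?_⟩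
  · rw [eval_integral (fun j => (hmemLp j).integrable one_le_two), hmean]
    simp
  · rw [integral_finsetSum _ fun j _ => (hmemLp j).integrable_sq, mul_sum, ← sum_add_distrib]
    exact sum_le_sum fun j _ => hsecond j

/-- (Unbiasedness and second moment of the IntDIANA estimator.)
With `Q_i = (1/α) ∘ Int(α ∘ (g_i − h_i))`, `h̄ = (1/n) Σ_i h_i` and
`gEst = h̄ + (1/n) Σ_i Q_i`, one has `E[gEst] = (1/n) Σ_i g_i` and
`E[‖gEst‖²] ≤ ‖(1/n) Σ_i g_i‖² + (1/(4n)) Σ_j 1/α_j²` (squared Euclidean norms written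
as sums of squares of coordinates). -/
theorem stmt15 (d n : ℕ) (hn : 0 < n)
    (g h : Fin n → Fin d → ℝ) (α : Fin d → ℝ) (hα : ∀ j, 0 < α j)
    (gEst : (Fin n → Fin d → ℝ) → Fin d → ℝ)
    (hgEst : ∀ ω j, gEst ω j = (n : ℝ)⁻¹ * ∑ i, h i j +
      (n : ℝ)⁻¹ * ∑ i, (α j)⁻¹ * (rInt (α j * (g i j - h i j)) (ω i j) : ℝ)) :
    (∫ ω, gEst ω ∂(roundMeasure n d)) = (n : ℝ)⁻¹ • ∑ i, g i ∧
      (∫ ω, ∑ j, (gEst ω j) ^ 2 ∂(roundMeasure n d)) ≤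
        (∑ j, ((n : ℝ)⁻¹ * ∑ i, g i j) ^ 2) + (1 / (4 * n)) * ∑ j, ((α j) ^ 2)⁻¹ :=
  stmt15_general d n g h α hα gEst hgEst
end

section
/- (Second moment of the averaged L-SVRG estimator.) For i = 1, …, n and l = 1, …, m let f_{il} : ℝ^d → ℝ be convex and differentiable with L_{il}-Lipschitz gradient; set f_i = (1/m) Σ_{l=1}^m f_{il}, f = (1/n) Σ_{i=1}^n f_i, and 𝓛 = 4 max_{i,l} L_{il}. Assume ∇f is L-Lipschitz and x* is a global minimizer of f (so ∇f(x*) = 0). Then for all x, w_1, …, w_n ∈ ℝ^d: ‖∇f(x)‖² + (1/n²) Σ_{i=1}^n (1/m) Σ_{l=1}^m ‖(∇f_{il}(x) − ∇f_{il}(w_i)) − (∇f_i(x) − ∇f_i(w_i))‖² ≤ (2L + 𝓛/n)(f(x) − f(x*)) + (2/n) σ₁, where σ₁ = (1/(mn)) Σ_{i=1}^n Σ_{l=1}^m ‖∇f_{il}(w_i) − ∇f_{il}(x*)‖². (The left-hand side equals the expected squared norm of the averaged L-SVRG gradient estimator with independent uniformly random component indices on each worker.) -/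
/-!
The first term `‖∇f x‖²` is at most `2L (f x - f x*)` by smoothness of `f`. The second is a sum of
worker-wise variances of component gradient differences; a variance is at most the second moment,
and by Young's inequality each difference `∇f_il x - ∇f_il w_i` is split at `x*`. The terms at `x`
are controlled by cocoercivity: the Bregman divergence of `f_il` at `x*` dominates
`‖∇f_il x - ∇f_il x*‖² / (2 L_il)`, and these divergences add up to `mn (f x - f x*)` because the
component gradients sum to `mn ∇f x* = 0`.
-/

open Finset AffineMap InnerProductSpace RealInnerProductSpace

variable {E : Type*} [NormedAddCommGroup E] [InnerProductSpace ℝ E]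

section Variance

variable {ι : Type*} [Fintype ι]

theorem sum_norm_sub_average_sq_le (a : ι → E) :
    ∑ l, ‖a l - (Fintype.card ι : ℝ)⁻¹ • ∑ k, a k‖ ^ 2 ≤ ∑ l, ‖a l‖ ^ 2 := by
  set N : ℝ := (Fintype.card ι : ℝ)
  -- the sum of squared deviations is `∑ ‖a l‖² - N⁻¹ ‖∑ a k‖²`, also when `N = 0`
  have hN : N * (N⁻¹ * N⁻¹) = N⁻¹ := by
    rcases eq_or_ne N 0 with h | h
    · simp [h]
    · field_simp
  have hcross : ∑ l, ⟪a l, ∑ k, a k⟫ = ‖∑ k, a k‖ ^ 2 := by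
    rw [← sum_inner, real_inner_self_eq_norm_sq]
  have hexpand : ∑ l, ‖a l - N⁻¹ • ∑ k, a k‖ ^ 2 = ∑ l, ‖a l‖ ^ 2 - N⁻¹ * ‖∑ k, a k‖ ^ 2 := by
    simp only [norm_sub_sq_real, sum_add_distrib, sum_sub_distrib, real_inner_smul_right,
      ← mul_sum, hcross, sum_const, card_univ, nsmul_eq_mul, norm_smul, Real.norm_eq_abs, mul_pow,
      sq_abs]
    linear_combination (‖∑ k, a k‖ ^ 2) * hN
  rw [hexpand]
  have : 0 ≤ N⁻¹ * ‖∑ k, a k‖ ^ 2 := by positivity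
  linarith

theorem sum_norm_sub_sub_average_sq_le (a b c : ι → E) :
    ∑ l, ‖(a l - b l) - (Fintype.card ι : ℝ)⁻¹ • ∑ k, (a k - b k)‖ ^ 2 ≤
      2 * ∑ l, ‖a l - c l‖ ^ 2 + 2 * ∑ l, ‖b l - c l‖ ^ 2 := by
  calc _ ≤ ∑ l, ‖a l - b l‖ ^ 2 := sum_norm_sub_average_sq_le _
    _ ≤ ∑ l, 2 * (‖a l - c l‖ ^ 2 + ‖b l - c l‖ ^ 2) := by
        refine sum_le_sum fun l _ => ?_
        rw [← sub_sub_sub_cancel_right (a l) (b l) (c l)]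
        exact (pow_le_pow_left₀ (norm_nonneg _) (norm_sub_le _ _) 2).trans add_sq_le
    _ = _ := by rw [← mul_sum, sum_add_distrib, mul_add]

end Variance

section Gradient

variable [CompleteSpace E] {g : E → ℝ}

theorem hasDerivAt_comp_lineMap (hg : Differentiable ℝ g) (x y : E) (t : ℝ) :
    HasDerivAt (fun s => g (lineMap x y s)) ⟪gradient g (lineMap x y t), y - x⟫ t := by
  have hfd := hasGradientAt_iff_hasFDerivAt.1 (hg (lineMap x y t)).hasGradientAt
  exact hfd.comp_hasDerivAt t hasDerivAt_lineMap

theorem ConvexOn.add_inner_gradient_le (hconv : ConvexOn ℝ Set.univ g) (hg : Differentiable ℝ g)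
    (x y : E) : g x + ⟪gradient g x, y - x⟫ ≤ g y := by
  have hline : ConvexOn ℝ Set.univ (fun s : ℝ => g (lineMap x y s)) := by
    have h := hconv.comp_affineMap (lineMap x y : ℝ →ᵃ[ℝ] E)
    rw [Set.preimage_univ] at h
    exact h
  have h := hline.le_slope_of_hasDerivAt (Set.mem_univ 0) (Set.mem_univ 1) zero_lt_one
    (hasDerivAt_comp_lineMap hg x y 0)
  simp only [slope, lineMap_apply_zero, lineMap_apply_one, sub_zero, inv_one, one_smul,
    vsub_eq_sub] at h
  linarith

theorem le_add_inner_gradient_add_sq {L : NNReal} (hg : Differentiable ℝ g)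
    (hlip : LipschitzWith L (gradient g)) (x y : E) :
    g y ≤ g x + ⟪gradient g x, y - x⟫ + L / 2 * ‖y - x‖ ^ 2 := by
  set v := y - x
  -- `h` is antitone on `[0, 1]`, since the Lipschitz bound makes its derivative nonpositive
  let h : ℝ → ℝ := fun t => g (lineMap x y t) - t * ⟪gradient g x, v⟫ - L / 2 * ‖v‖ ^ 2 * t ^ 2
  have hderiv : ∀ t, HasDerivAt h
      (⟪gradient g (lineMap x y t) - gradient g x, v⟫ - L * ‖v‖ ^ 2 * t) t := by
    intro t
    refine (((hasDerivAt_comp_lineMap hg x y t).sub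
      ((hasDerivAt_id t).mul_const ⟪gradient g x, v⟫)).sub
      (((hasDerivAt_id t).pow 2).const_mul (L / 2 * ‖v‖ ^ 2))).congr_deriv ?_
    simp only [inner_sub_left, id_eq, one_mul]
    ring
  have hnonpos : ∀ t, 0 ≤ t →
      ⟪gradient g (lineMap x y t) - gradient g x, v⟫ - L * ‖v‖ ^ 2 * t ≤ 0 := by
    intro t ht
    have hdist : ‖gradient g (lineMap x y t) - gradient g x‖ ≤ L * (t * ‖v‖) := by
      simpa [← dist_eq_norm, dist_lineMap_left, abs_of_nonneg ht, dist_comm x y, v] using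
        hlip.dist_le_mul (lineMap x y t) x
    nlinarith [real_inner_le_norm (gradient g (lineMap x y t) - gradient g x) v, norm_nonneg v]
  have hanti : AntitoneOn h (Set.Icc 0 1) :=
    antitoneOn_of_hasDerivWithinAt_nonpos (convex_Icc 0 1)
      (fun t _ => (hderiv t).continuousAt.continuousWithinAt)
      (fun t _ => (hderiv t).hasDerivWithinAt)
      (fun t ht => hnonpos t (by rw [interior_Icc] at ht; exact ht.1.le))
  have h10 := hanti (by simp) (by simp) zero_le_one
  simp only [h, lineMap_apply_zero, lineMap_apply_one] at h10
  linarith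

theorem gradient_eq_zero_of_forall_le {xs : E} (hmin : ∀ y, g xs ≤ g y) : gradient g xs = 0 := by
  have hloc : IsLocalMin g xs := Filter.Eventually.of_forall hmin
  rw [gradient, hloc.fderiv_eq_zero, map_zero]

theorem sq_norm_gradient_le_of_forall_le {L : NNReal} (hg : Differentiable ℝ g)
    (hlip : LipschitzWith L (gradient g)) {xs : E} (hmin : ∀ y, g xs ≤ g y) (x : E) :
    ‖gradient g x‖ ^ 2 ≤ 2 * L * (g x - g xs) := by
  rcases eq_zero_or_pos L with hL | hL
  · have hconst : gradient g x = gradient g xs := by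
      simpa [hL] using hlip.dist_le_mul x xs
    simp [hconst, gradient_eq_zero_of_forall_le hmin, hL]
  · -- compare `g xs` with the value of `g` after a gradient step of length `1 / L`
    have hL' : (0 : ℝ) < L := hL
    have hstep := le_add_inner_gradient_add_sq hg hlip x (x - (L : ℝ)⁻¹ • gradient g x)
    simp only [sub_sub_cancel_left, inner_neg_right, real_inner_smul_right, norm_neg, norm_smul,
      real_inner_self_eq_norm_sq, Real.norm_eq_abs, abs_inv, abs_of_pos hL', mul_pow] at hstep
    have hval := hmin (x - (L : ℝ)⁻¹ • gradient g x)
    have key : ‖gradient g x‖ ^ 2 / (2 * L) ≤ g x - g xs := by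
      have : (L : ℝ) / 2 * ((L : ℝ)⁻¹ ^ 2 * ‖gradient g x‖ ^ 2) - (L : ℝ)⁻¹ * ‖gradient g x‖ ^ 2
          = -(‖gradient g x‖ ^ 2 / (2 * L)) := by field_simp; ring
      linarith
    rwa [div_le_iff₀ (by positivity), mul_comm] at key

theorem ConvexOn.sq_norm_gradient_sub_le {L : NNReal} (hconv : ConvexOn ℝ Set.univ g)
    (hg : Differentiable ℝ g) (hlip : LipschitzWith L (gradient g)) (x y : E) :
    ‖gradient g x - gradient g y‖ ^ 2 ≤ 2 * L * (g x - g y - ⟪gradient g y, x - y⟫) := by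
  -- tilting `g` by the linear form `⟪∇g y, ·⟫` moves its minimum to `y`
  set φ : E → ℝ := fun z => g z - ⟪gradient g y, z⟫
  have hgradφ : ∀ z, HasGradientAt φ (gradient g z - gradient g y) z := by
    intro z
    rw [hasGradientAt_iff_hasFDerivAt, map_sub]
    exact (hasGradientAt_iff_hasFDerivAt.1 (hg z).hasGradientAt).sub
      (toDual ℝ E (gradient g y)).hasFDerivAt
  have hgφ : gradient φ = fun z => gradient g z - gradient g y :=
    funext fun z => (hgradφ z).gradient
  have hconvφ : ConvexOn ℝ Set.univ φ :=
    hconv.sub (((innerSL ℝ (gradient g y)).toLinearMap).concaveOn convex_univ)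
  have hlipφ : LipschitzWith L (gradient φ) := by
    rw [hgφ]
    simpa only [LipschitzWith, edist_sub_right] using hlip
  have hminφ : ∀ z, φ y ≤ φ z := by
    intro z
    have := hconvφ.add_inner_gradient_le (fun z => (hgradφ z).differentiableAt) y z
    simpa [hgφ] using this
  have := sq_norm_gradient_le_of_forall_le (fun z => (hgradφ z).differentiableAt) hlipφ hminφ x
  simp only [hgφ, φ] at this
  rwa [inner_sub_right, sub_sub_sub_comm]

end Gradient

section FiniteFamily

variable [CompleteSpace E] {ι : Type*} [Fintype ι] {g : ι → E → ℝ}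

theorem hasGradientAt_of_forall_eq_mul_sum {h : E → ℝ} {c : ℝ} (hh : ∀ z, h z = c * ∑ k, g k z)
    {z : E} (hg : ∀ k, DifferentiableAt ℝ (g k) z) :
    HasGradientAt h (c • ∑ k, gradient (g k) z) z := by
  rw [funext hh, hasGradientAt_iff_hasFDerivAt, map_smul, map_sum]
  exact (HasFDerivAt.fun_sum fun k _ =>
    hasGradientAt_iff_hasFDerivAt.1 (hg k).hasGradientAt).const_mul c

theorem sum_sq_norm_gradient_sub_sub_average_le {h : E → ℝ}
    (hh : ∀ z, h z = (Fintype.card ι : ℝ)⁻¹ * ∑ k, g k z) (hg : ∀ k, Differentiable ℝ (g k))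
    (x w xs : E) :
    ∑ k, ‖(gradient (g k) x - gradient (g k) w) - (gradient h x - gradient h w)‖ ^ 2 ≤
      2 * ∑ k, ‖gradient (g k) x - gradient (g k) xs‖ ^ 2 +
        2 * ∑ k, ‖gradient (g k) w - gradient (g k) xs‖ ^ 2 := by
  rw [(hasGradientAt_of_forall_eq_mul_sum hh fun k => hg k x).gradient,
    (hasGradientAt_of_forall_eq_mul_sum hh fun k => hg k w).gradient, ← smul_sub,
    ← sum_sub_distrib]
  exact sum_norm_sub_sub_average_sq_le _ _ _

theorem inv_card_mul_sum_sq_norm_gradient_sub_le [Nonempty ι] {h : E → ℝ} {K : NNReal}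
    (hh : ∀ z, h z = (Fintype.card ι : ℝ)⁻¹ * ∑ k, g k z)
    (hconv : ∀ k, ConvexOn ℝ Set.univ (g k)) (hg : ∀ k, Differentiable ℝ (g k))
    (hlip : ∀ k, LipschitzWith K (gradient (g k))) {xs : E} (hmin : ∀ y, h xs ≤ h y) (x : E) :
    (Fintype.card ι : ℝ)⁻¹ * ∑ k, ‖gradient (g k) x - gradient (g k) xs‖ ^ 2 ≤
      2 * K * (h x - h xs) := by
  have hcrit : ∑ k, gradient (g k) xs = 0 := by
    have := gradient_eq_zero_of_forall_le hmin
    rwa [(hasGradientAt_of_forall_eq_mul_sum hh fun k => hg k xs).gradient, smul_eq_zero,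
      or_iff_right (by positivity)] at this
  have hinner : ∑ k, ⟪gradient (g k) xs, x - xs⟫ = 0 := by
    rw [← sum_inner, hcrit, inner_zero_left]
  calc _ ≤ (Fintype.card ι : ℝ)⁻¹ *
        ∑ k, 2 * K * (g k x - g k xs - ⟪gradient (g k) xs, x - xs⟫) := by
        gcongr with k
        exact (hconv k).sq_norm_gradient_sub_le (hg k) (hlip k) x xs
    _ = 2 * K * (h x - h xs) := by
        rw [hh, hh, ← mul_sum, sum_sub_distrib, hinner, sum_sub_distrib]
        ring

end FiniteFamily

/-- (Second moment of the averaged L-SVRG estimator.) -/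
theorem stmt16 (d n m : ℕ) (hn : 0 < n) (hm : 0 < m)
    (f : Fin n → Fin m → EuclideanSpace ℝ (Fin d) → ℝ)
    (L' : Fin n → Fin m → NNReal)
    (hconv : ∀ i l, ConvexOn ℝ Set.univ (f i l))
    (hdiff : ∀ i l, Differentiable ℝ (f i l))
    (hlip : ∀ i l, LipschitzWith (L' i l) (fun x => gradient (f i l) x))
    (fi : Fin n → EuclideanSpace ℝ (Fin d) → ℝ)
    (hfi : ∀ i x, fi i x = (m : ℝ)⁻¹ * ∑ l, f i l x)
    (F : EuclideanSpace ℝ (Fin d) → ℝ)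
    (hF : ∀ x, F x = (n : ℝ)⁻¹ * ∑ i, fi i x)
    (𝓛 : ℝ) (h𝓛 : 𝓛 = 4 * (univ.sup fun i => univ.sup fun l => L' i l : NNReal))
    (L : NNReal) (hLipF : LipschitzWith L (fun x => gradient F x))
    (xs : EuclideanSpace ℝ (Fin d)) (hmin : ∀ y, F xs ≤ F y) :
    ∀ (x : EuclideanSpace ℝ (Fin d)) (w : Fin n → EuclideanSpace ℝ (Fin d)),
      ‖gradient F x‖ ^ 2 +
        (1 / (n : ℝ) ^ 2) * ∑ i, (m : ℝ)⁻¹ * ∑ l,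
          ‖(gradient (f i l) x - gradient (f i l) (w i)) -
            (gradient (fi i) x - gradient (fi i) (w i))‖ ^ 2 ≤
      (2 * L + 𝓛 / n) * (F x - F xs) +
        (2 / n) * ((1 / (m * n : ℝ)) * ∑ i, ∑ l,
          ‖gradient (f i l) (w i) - gradient (f i l) xs‖ ^ 2) := by
  intro x w
  have : Nonempty (Fin n) := Fin.pos_iff_nonempty.1 hn
  have : Nonempty (Fin m) := Fin.pos_iff_nonempty.1 hm
  have hFavg : ∀ z, F z = (Fintype.card (Fin n × Fin m) : ℝ)⁻¹ *
      ∑ p : Fin n × Fin m, f p.1 p.2 z := fun z => by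
    simp only [hF, hfi, Fintype.card_prod, Fintype.card_fin, Nat.cast_mul, mul_inv,
      Fintype.sum_prod_type, mul_sum, mul_assoc]
  have hK : ∀ p : Fin n × Fin m, L' p.1 p.2 ≤ univ.sup fun i => univ.sup fun l => L' i l :=
    fun p => le_sup_of_le (mem_univ p.1) (le_sup (f := fun l => L' p.1 l) (mem_univ p.2))
  have hcoco := inv_card_mul_sum_sq_norm_gradient_sub_le hFavg (fun p => hconv p.1 p.2)
    (fun p => hdiff p.1 p.2) (fun p => (hlip p.1 p.2).weaken (hK p)) hmin x
  simp only [Fintype.card_prod, Fintype.card_fin, Nat.cast_mul, Fintype.sum_prod_type] at hcoco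
  have hvar := sum_le_sum fun i (_ : i ∈ univ) => sum_sq_norm_gradient_sub_sub_average_le
    (by simpa using hfi i) (hdiff i) x (w i) xs
  rw [sum_add_distrib, ← mul_sum, ← mul_sum] at hvar
  have hG := sq_norm_gradient_le_of_forall_le
    (fun z => (hasGradientAt_of_forall_eq_mul_sum hFavg fun p => hdiff p.1 p.2 z).differentiableAt)
    hLipF hmin x
  rw [← mul_sum, h𝓛]
  linear_combination hG + (1 / (n : ℝ) ^ 2 * (m : ℝ)⁻¹) * hvar + (2 / (n : ℝ)) * hcoco
end

section
/- (One-step bound for the IntDIANA shift sequence.) Fix vectors g_1, …, g_n, h_1, …, h_n, c_1, …, c_n ∈ ℝ^d and a scaling vector α ∈ ℝ^d with strictly positive entries. Let Q_i = (1/α) ∘ Int(α ∘ (g_i − h_i)) with randomized roundings independent across coordinates, and set h_i⁺ = h_i + Q_i. Then E[(1/n) Σ_{i=1}^n ‖h_i⁺ − c_i‖²] ≤ (1/n) Σ_{i=1}^n ‖g_i − c_i‖² + Σ_{j=1}^d 1/α_j². -/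
open MeasureTheory Finset

/-! By linearity the expectation splits into one-dimensional integrals against the uniform
marginals, one per worker and coordinate. With `p` the fractional part of `t`, the rounding
`Int t` has mean `t` and variance `p (1 - p) ≤ 1/4`, whence
`E (a + s Int t)² = (a + s t)² + s² p (1 - p)`. For `a = h - c`, `s = 1/α` and `t = α (g - h)`
this is at most `(g - c)² + 1/(4α²)` in every coordinate. -/

instance inst_s17 : IsProbabilityMeasure (volume.restrict (Set.Icc (0 : ℝ) 1)) := ⟨by simp⟩

lemma comp_rInt_eq_add_indicator {E : Type*} [AddCommGroup E] (f : ℤ → E) (t : ℝ) :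
    (fun u => f (rInt t u)) =
      fun u => f ⌊t⌋ + (Set.Iio (Int.fract t)).indicator (fun _ => f (⌊t⌋ + 1) - f ⌊t⌋) u := by
  ext u
  by_cases hu : u < Int.fract t <;> simp [rInt, hu]

lemma measurable_comp_rInt (f : ℤ → ℝ) (t : ℝ) : Measurable fun u => f (rInt t u) := by
  rw [comp_rInt_eq_add_indicator]
  exact measurable_const.add (measurable_const.indicator measurableSet_Iio)

lemma integrable_comp_rInt (f : ℤ → ℝ) (t : ℝ) (μ : Measure ℝ) [IsFiniteMeasure μ] :
    Integrable (fun u => f (rInt t u)) μ := by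
  rw [comp_rInt_eq_add_indicator]
  exact (integrable_const _).add ((integrable_const _).indicator measurableSet_Iio)

lemma setIntegral_comp_rInt (f : ℤ → ℝ) (t : ℝ) :
    ∫ u in Set.Icc (0 : ℝ) 1, f (rInt t u) =
      (1 - Int.fract t) * f ⌊t⌋ + Int.fract t * f (⌊t⌋ + 1) := by
  have hvol : volume.real (Set.Iio (Int.fract t) ∩ Set.Icc 0 1) = Int.fract t := by
    have hf1 := Int.fract_lt_one t
    rw [show Set.Iio (Int.fract t) ∩ Set.Icc 0 1 = Set.Ico 0 (Int.fract t) by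
        ext; simp only [Set.mem_inter_iff, Set.mem_Iio, Set.mem_Icc, Set.mem_Ico]; grind,
      Real.volume_real_Ico_of_le (Int.fract_nonneg t), sub_zero]
  rw [comp_rInt_eq_add_indicator, integral_add (integrable_const _)
      ((integrable_const _).indicator measurableSet_Iio),
    integral_indicator_const _ measurableSet_Iio, integral_const,
    measureReal_restrict_apply measurableSet_Iio, hvol]
  simp only [probReal_univ, smul_eq_mul, one_mul]
  ring

lemma setIntegral_sq_add_mul_rInt (a s t : ℝ) :
    ∫ u in Set.Icc (0 : ℝ) 1, (a + s * rInt t u) ^ 2 =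
      (a + s * t) ^ 2 + s ^ 2 * (Int.fract t * (1 - Int.fract t)) := by
  have ht : t = ⌊t⌋ + Int.fract t := (Int.floor_add_fract t).symm
  rw [setIntegral_comp_rInt (fun k => (a + s * k) ^ 2)]
  push_cast
  linear_combination (-s * (2 * a + s * (⌊t⌋ + Int.fract t + t))) * ht

lemma setIntegral_sq_add_mul_rInt_le (a s t : ℝ) :
    ∫ u in Set.Icc (0 : ℝ) 1, (a + s * rInt t u) ^ 2 ≤ (a + s * t) ^ 2 + s ^ 2 / 4 := by
  rw [setIntegral_sq_add_mul_rInt]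
  have : Int.fract t * (1 - Int.fract t) ≤ 1 / 4 := by nlinarith [sq_nonneg (Int.fract t - 1 / 2)]
  nlinarith [sq_nonneg s]

lemma setIntegral_sq_sub_add_inv_mul_rInt_le {α : ℝ} (hα : 0 < α) (x y c : ℝ) :
    ∫ u in Set.Icc (0 : ℝ) 1, (y - c + α⁻¹ * rInt (α * (x - y)) u) ^ 2 ≤
      (x - c) ^ 2 + (α ^ 2)⁻¹ / 4 := by
  have hmean : y - c + α⁻¹ * (α * (x - y)) = x - c := by
    field_simp
    ring
  simpa only [hmean, inv_pow] using setIntegral_sq_add_mul_rInt_le (y - c) α⁻¹ (α * (x - y))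

section DoublePi

variable {X E ι κ : Type*} [MeasurableSpace X] [NormedAddCommGroup E] [Fintype ι] [Fintype κ]
  (ν : Measure X)

lemma integrable_pi_pi_comp_apply [IsFiniteMeasure ν] {f : X → E} (hf : Integrable f ν)
    (i : ι) (j : κ) :
    Integrable (fun ω : ι → κ → X => f (ω i j)) (Measure.pi fun _ => Measure.pi fun _ => ν) :=
  integrable_comp_eval (μ := fun _ : ι => Measure.pi fun _ : κ => ν)
    (f := fun x => f (x j)) (integrable_comp_eval hf)

lemma integral_pi_pi_comp_apply [IsProbabilityMeasure ν] [NormedSpace ℝ E] {f : X → E}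
    (hf : AEStronglyMeasurable f ν) (i : ι) (j : κ) :
    ∫ ω : ι → κ → X, f (ω i j) ∂(Measure.pi fun _ => Measure.pi fun _ => ν) = ∫ x, f x ∂ν := by
  rw [integral_comp_eval (μ := fun _ : ι => Measure.pi fun _ : κ => ν) (i := i)
    (f := fun x => f (x j)), integral_comp_eval hf]
  exact hf.comp_measurePreserving (measurePreserving_eval _ j)

end DoublePi

lemma integral_sum_sum {Ω E ι κ : Type*} [MeasurableSpace Ω] [NormedAddCommGroup E]
    [NormedSpace ℝ E] [Fintype ι] [Fintype κ] {μ : Measure Ω} {F : ι → κ → Ω → E}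
    (hF : ∀ i j, Integrable (F i j) μ) :
    ∫ ω, ∑ i, ∑ j, F i j ω ∂μ = ∑ i, ∑ j, ∫ ω, F i j ω ∂μ := by
  rw [integral_finsetSum _ fun i _ => integrable_finsetSum _ fun j _ => hF i j]
  exact sum_congr rfl fun i _ => integral_finsetSum _ fun j _ => hF i j

/-- (One-step bound for the IntDIANA shift sequence.)
With `Q_i = (1/α) ∘ Int(α ∘ (g_i − h_i))` and `h_i⁺ = h_i + Q_i`, one has
`E[(1/n) Σ_i ‖h_i⁺ − c_i‖²] ≤ (1/n) Σ_i ‖g_i − c_i‖² + Σ_j 1/α_j²`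
(squared Euclidean norms written as sums of squares of coordinates). -/
theorem stmt17 (d n : ℕ) (hn : 0 < n)
    (g h c : Fin n → Fin d → ℝ) (α : Fin d → ℝ) (hα : ∀ j, 0 < α j)
    (hplus : (Fin n → Fin d → ℝ) → Fin n → Fin d → ℝ)
    (hhplus : ∀ ω i j, hplus ω i j =
      h i j + (α j)⁻¹ * (rInt (α j * (g i j - h i j)) (ω i j) : ℝ)) :
    (∫ ω, (n : ℝ)⁻¹ * ∑ i, ∑ j, (hplus ω i j - c i j) ^ 2 ∂(roundMeasure n d)) ≤
      (n : ℝ)⁻¹ * ∑ i, ∑ j, (g i j - c i j) ^ 2 + ∑ j, ((α j) ^ 2)⁻¹ := by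
  let t (i : Fin n) (j : Fin d) : ℝ := α j * (g i j - h i j)
  let ψ (i : Fin n) (j : Fin d) (k : ℤ) : ℝ := (h i j - c i j + (α j)⁻¹ * k) ^ 2
  have hψ_int (i j) : Integrable (fun ω => ψ i j (rInt (t i j) (ω i j))) (roundMeasure n d) :=
    integrable_pi_pi_comp_apply _ (integrable_comp_rInt (ψ i j) (t i j) _) i j
  have hψ_le (i j) : ∫ ω, ψ i j (rInt (t i j) (ω i j)) ∂roundMeasure n d ≤
      (g i j - c i j) ^ 2 + (α j ^ 2)⁻¹ := by
    rw [roundMeasure, integral_pi_pi_comp_apply _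
      (measurable_comp_rInt (ψ i j) (t i j)).aestronglyMeasurable]
    refine (setIntegral_sq_sub_add_inv_mul_rInt_le (hα j) _ _ _).trans ?_
    gcongr
    exact div_le_self (by positivity) (by norm_num)
  have hintegrand (ω : Fin n → Fin d → ℝ) :
      ∑ i, ∑ j, (hplus ω i j - c i j) ^ 2 = ∑ i, ∑ j, ψ i j (rInt (t i j) (ω i j)) := by
    refine sum_congr rfl fun i _ => sum_congr rfl fun j _ => ?_
    rw [hhplus]
    ring
  calc ∫ ω, (n : ℝ)⁻¹ * ∑ i, ∑ j, (hplus ω i j - c i j) ^ 2 ∂roundMeasure n d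
      = (n : ℝ)⁻¹ * ∑ i, ∑ j, ∫ ω, ψ i j (rInt (t i j) (ω i j)) ∂roundMeasure n d := by
        simp only [hintegrand, integral_const_mul, integral_sum_sum hψ_int]
    _ ≤ (n : ℝ)⁻¹ * ∑ i, ∑ j, ((g i j - c i j) ^ 2 + (α j ^ 2)⁻¹) := by
        gcongr with i _ j _
        exact hψ_le i j
    _ = (n : ℝ)⁻¹ * ∑ i, ∑ j, (g i j - c i j) ^ 2 + ∑ j, (α j ^ 2)⁻¹ := by
        simp only [sum_add_distrib, sum_const, card_univ, Fintype.card_fin, nsmul_eq_mul]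
        field_simp
end

section
/- (Lyapunov contraction for IntDIANA with the GD estimator, strongly convex case.) Let L, 𝓛, n, η > 0 and μ ≥ 0 satisfy η μ ≤ 1 and 2η(L + L²𝓛/(32n)) ≤ 1 (so in particular ηL ≤ 1/2). Let (a_k), (b_k), (s_k), (F_k) be sequences of nonnegative reals satisfying, for every k: a_{k+1} + b_{k+1} ≤ (1 − ημ) a_k + (1/2) b_k − 2η(1 − 2ηL) F_k and s_{k+1} ≤ (𝓛/2) F_k + n b_k. Define Ψ_k = a_k + b_k + (L²η²/(4n)) s_k and θ = max{1 − ημ, 3/4}. Then Ψ_{k+1} ≤ θ Ψ_k for every k; consequently Ψ_k ≤ θ^k Ψ_0 for all k. -/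
/-- (Lyapunov contraction for IntDIANA with the GD estimator, strongly convex case.) -/
theorem stmt19 (L 𝓛 η : ℝ) (n : ℕ) (μ : ℝ)
    (hL : 0 < L) (h𝓛 : 0 < 𝓛) (hn : 0 < n) (hη : 0 < η) (hμ : 0 ≤ μ)
    (hημ : η * μ ≤ 1) (hstep : 2 * η * (L + L ^ 2 * 𝓛 / (32 * n)) ≤ 1)
    (a b s F : ℕ → ℝ)
    (ha : ∀ k, 0 ≤ a k) (hb : ∀ k, 0 ≤ b k) (hs : ∀ k, 0 ≤ s k) (hF : ∀ k, 0 ≤ F k)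
    (hrec1 : ∀ k, a (k + 1) + b (k + 1) ≤
      (1 - η * μ) * a k + (1 / 2) * b k - 2 * η * (1 - 2 * η * L) * F k)
    (hrec2 : ∀ k, s (k + 1) ≤ (𝓛 / 2) * F k + n * b k)
    (Ψ : ℕ → ℝ) (hΨ : ∀ k, Ψ k = a k + b k + (L ^ 2 * η ^ 2 / (4 * n)) * s k)
    (θ : ℝ) (hθ : θ = max (1 - η * μ) (3 / 4)) :
    (∀ k, Ψ (k + 1) ≤ θ * Ψ k) ∧ (∀ k, Ψ k ≤ θ ^ k * Ψ 0) := by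
  have hn' : (0:ℝ) < n := by exact_mod_cast hn
  have hθ1 : 1 - η * μ ≤ θ := hθ ▸ le_max_left _ _
  have hθ2 : (3:ℝ)/4 ≤ θ := hθ ▸ le_max_right _ _
  have hθ0 : 0 ≤ θ := le_trans (by norm_num) hθ2
  have hC : (0:ℝ) ≤ L ^ 2 * η ^ 2 / (4 * n) := by positivity
  -- ηL ≤ 1/2
  have hηL : η * L ≤ 1 / 2 := by
    have h : 0 < L ^ 2 * 𝓛 / (32 * n) := by positivity
    nlinarith
  -- F coefficient nonpositive: η²L²𝓛/(8n) ≤ 2η(1-2ηL)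
  have hFcoef : L ^ 2 * η ^ 2 / (4 * n) * (𝓛 / 2) ≤ 2 * η * (1 - 2 * η * L) := by
    have h := mul_le_mul_of_nonneg_left hstep (le_of_lt hη)
    have hkey : η * (2 * η * (L + L ^ 2 * 𝓛 / (32 * n))) = 2 * η ^ 2 * L + η ^ 2 * L ^ 2 * 𝓛 / (16 * n) := by
      field_simp; ring
    rw [hkey] at h
    have : L ^ 2 * η ^ 2 / (4 * n) * (𝓛 / 2) = η ^ 2 * L ^ 2 * 𝓛 / (8 * n) := by ring
    rw [this]
    have h8 : η ^ 2 * L ^ 2 * 𝓛 / (8 * (n:ℝ)) = 2 * (η ^ 2 * L ^ 2 * 𝓛 / (16 * (n:ℝ))) := by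
      ring
    linarith
  have main : ∀ k, Ψ (k + 1) ≤ θ * Ψ k := by
    intro k
    rw [hΨ, hΨ]
    have h1 := hrec1 k
    have h2 := mul_le_mul_of_nonneg_left (hrec2 k) hC
    have hbcoef : L ^ 2 * η ^ 2 / (4 * n) * (n : ℝ) = L ^ 2 * η ^ 2 / 4 := by
      field_simp
    have hb4 : L ^ 2 * η ^ 2 / 4 ≤ 1 / 16 := by
      have := mul_le_mul hηL hηL (by positivity) (by norm_num)
      nlinarith
    have hθa := mul_le_mul_of_nonneg_right hθ1 (ha k)
    have hθb := mul_le_mul_of_nonneg_right hθ2 (hb k)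
    have hθs : 0 ≤ θ * (L ^ 2 * η ^ 2 / (4 * n) * s k) := mul_nonneg hθ0 (mul_nonneg hC (hs k))
    have hF' := mul_le_mul_of_nonneg_right hFcoef (hF k)
    nlinarith [h1, h2, hθa, hθb, hθs, hF', mul_nonneg hC (hs (k+1)), hb k]
  refine ⟨main, ?_⟩
  intro k
  induction k with
  | zero => simp
  | succ k ih =>
    calc Ψ (k + 1) ≤ θ * Ψ k := main k
    _ ≤ θ * (θ ^ k * Ψ 0) := mul_le_mul_of_nonneg_left ih hθ0
    _ = θ ^ (k + 1) * Ψ 0 := by ring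
end
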